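/- Let $(a_n)$ and $(b_n)$ be strictly increasing sequences of positive integers with $L_n = b_n/a_n \to L \in (0, \infty)$, where $L$ is irrational. Then for every $m \in \mathbb{Z}$ and every $t > 0$, $\frac{1}{a_n} \sum_{j=1}^{\lfloor a_n t \rfloor} f_{m,L}(\{j L_n\}) \to t \int_0^1 f_{m,L}(x)\, dx$ as $n \to \infty$. -/

import Mathlib

/-!
For `h ≠ 0` the Weyl sum `∑_{j ≤ N} e(h j L_n)` is a geometric sum of modulus at most
`2 / |e(h L_n) - 1|`, which stays bounded since `e(h L_n) → e(h L) ≠ 1` for irrational `L`;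
divided by `a_n → ∞` it vanishes. Density of trigonometric polynomials in `C(ℝ/ℤ)` turns this
into the convergence of the normalised sums for every continuous function on the circle. The
function `f = f_{m,L}` is continuous on `[0, 1]` but `f 0 ≠ f 1` in general; `f + c y^(k+1)` with
`c = f 0 - f 1` is periodic, and the error term `c y^(k+1)` is dominated on `[0, 1)` by the
periodic function `|c| (y^(k+1) + (1-y)^(k+1))` of integral `2|c|/(k+2)`.
-/

open Filter MeasureTheory

noncomputable def fmL (L : ℝ) (m : ℤ) (x : ℝ) : ℝ :=
  (|x - m + 1| ^ ((1 : ℝ) / 3) + |x - m - L| ^ ((1 : ℝ) / 3)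
    - |x - m| ^ ((1 : ℝ) / 3) - |x - m + 1 - L| ^ ((1 : ℝ) / 3)) ^ 3

open Topology Finset AddCircle

theorem tendsto_of_forall_approx {α β : Type*} [PseudoMetricSpace β] {l : Filter α}
    {u : α → β} {b : β}
    (h : ∀ ε > 0, ∃ v : α → β, ∃ c, Tendsto v l (𝓝 c) ∧ dist c b ≤ ε ∧
      ∀ᶠ a in l, dist (u a) (v a) ≤ ε) :
    Tendsto u l (𝓝 b) := by
  refine Metric.tendsto_nhds.2 fun ε hε => ?_
  obtain ⟨v, c, hv, hcb, huv⟩ := h (ε / 3) (by positivity)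
  filter_upwards [huv, Metric.tendsto_nhds.1 hv (ε / 3) (by positivity)] with a h₁ h₂
  calc dist (u a) b ≤ dist (u a) (v a) + dist (v a) c + dist c b := dist_triangle4 _ _ _ _
    _ < ε := by linarith

section ScaledSum

variable {α ι X E : Type*} [NormedAddCommGroup E] [NormedSpace ℝ E]

noncomputable def scaledSum (A : α → ℝ) (s : α → Finset ι) (p : α → ι → X) (f : X → E)
    (a : α) : E :=
  (A a)⁻¹ • ∑ j ∈ s a, f (p a j)

variable (A : α → ℝ) (s : α → Finset ι) (p : α → ι → X)

theorem scaledSum_add (f g : X → E) :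
    scaledSum A s p (f + g) = scaledSum A s p f + scaledSum A s p g := by
  ext a; simp [scaledSum, sum_add_distrib]

theorem scaledSum_sub (f g : X → E) :
    scaledSum A s p (f - g) = scaledSum A s p f - scaledSum A s p g := by
  ext a; simp [scaledSum, sum_sub_distrib, smul_sub]

theorem scaledSum_smul {𝕜 : Type*} [NormedField 𝕜] [NormedSpace 𝕜 E]
    [SMulCommClass ℝ 𝕜 E] (c : 𝕜) (f : X → E) :
    scaledSum A s p (c • f) = c • scaledSum A s p f := by
  ext a; simp [scaledSum, ← smul_sum, smul_comm _ c]

theorem scaledSum_const (c : E) :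
    scaledSum A s p (fun _ => c) = fun a => ((#(s a) : ℝ) / A a) • c := by
  ext a; simp [scaledSum, ← Nat.cast_smul_eq_nsmul ℝ, smul_smul, div_eq_inv_mul]

theorem norm_scaledSum_le {f : X → E} {C : ℝ} (hf : ∀ x, ‖f x‖ ≤ C) (a : α) :
    ‖scaledSum A s p f a‖ ≤ |(#(s a) : ℝ) / A a| * C := by
  rw [scaledSum, norm_smul, Real.norm_eq_abs, abs_div, Nat.abs_cast, div_eq_inv_mul, abs_inv,
    mul_assoc]
  gcongr
  simpa using norm_sum_le_of_le (s a) fun j _ => hf (p a j)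

theorem abs_scaledSum_le_abs_scaledSum {f g : X → ℝ} {a : α} (hf : ∀ j, 0 ≤ f (p a j))
    (hfg : ∀ j, f (p a j) ≤ g (p a j)) :
    |scaledSum A s p f a| ≤ |scaledSum A s p g a| := by
  simp only [scaledSum, smul_eq_mul, abs_mul]
  gcongr
  · exact sum_nonneg fun j _ => hf j
  · exact hfg _

end ScaledSum

theorem norm_sum_Icc_zpow_le {w : ℂ} (hw : ‖w‖ = 1) (hw1 : w ≠ 1) (N : ℤ) :
    ‖∑ j ∈ Icc 1 N, w ^ j‖ ≤ 2 / ‖w - 1‖ := by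
  have hw0 : w ≠ 0 := norm_ne_zero_iff.1 (hw.symm ▸ one_ne_zero)
  have hsum : ∑ j ∈ Icc 1 N, w ^ j = w * ∑ i ∈ range N.toNat, w ^ i := by
    rw [Int.Icc_eq_finset_map, sum_map, add_sub_cancel_right, mul_sum]
    refine sum_congr rfl fun i _ => ?_
    simp [zpow_add₀ hw0]
  rw [hsum, geom_sum_eq hw1, norm_mul, hw, one_mul, norm_div]
  gcongr
  calc ‖w ^ N.toNat - 1‖ ≤ ‖w ^ N.toNat‖ + ‖(1 : ℂ)‖ := norm_sub_le _ _
    _ = 2 := by rw [norm_pow, hw]; norm_num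

theorem fourier_zsmul_apply {T : ℝ} (h j : ℤ) (x : AddCircle T) :
    fourier h (j • x) = fourier h x ^ j := by
  rw [fourier_apply, fourier_apply, smul_comm, toCircle_zsmul, Circle.coe_zpow]

theorem fourier_coe_ne_one_of_irrational {L : ℝ} (hL : Irrational L) {h : ℤ} (hh : h ≠ 0) :
    fourier h (L : UnitAddCircle) ≠ 1 := by
  intro h1
  have : h • (L : UnitAddCircle) = 0 :=
    injective_toCircle one_ne_zero (Circle.ext (by simpa using h1))
  rw [← AddCircle.coe_zsmul, zsmul_eq_mul, coe_eq_zero_iff] at this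
  obtain ⟨k, hk⟩ := this
  exact (hL.intCast_mul hh).ne_int k (by simpa using hk.symm)

theorem tendsto_scaledSum_fourier_of_irrational {α : Type*} {l : Filter α} {A : α → ℝ}
    (hA : Tendsto A l atTop) (N : α → ℤ) {θ : α → ℝ} {L : ℝ} (hθ : Tendsto θ l (𝓝 L))
    (hL : Irrational L) {h : ℤ} (hh : h ≠ 0) :
    Tendsto (scaledSum A (fun a => Icc 1 (N a)) (fun a j => ((j * θ a : ℝ) : UnitAddCircle))
      (fourier h)) l (𝓝 0) := by
  set w : α → ℂ := fun a => fourier h (θ a : UnitAddCircle)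
  have hw : Tendsto w l (𝓝 (fourier h (L : UnitAddCircle))) :=
    ((map_continuous (fourier h)).tendsto _).comp
      (((AddCircle.continuous_mk' (1 : ℝ)).tendsto L).comp hθ)
  have hw1 :
      Tendsto (fun a => 2 / ‖w a - 1‖) l (𝓝 (2 / ‖fourier h (L : UnitAddCircle) - 1‖)) :=
    tendsto_const_nhds.div (hw.sub_const 1).norm
      (norm_ne_zero_iff.2 (sub_ne_zero.2 (fourier_coe_ne_one_of_irrational hL hh)))
  have hbdd : IsBoundedUnder (· ≤ ·) l (norm ∘ fun a => ∑ j ∈ Icc 1 (N a), w a ^ j) := by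
    refine hw1.isBoundedUnder_le.mono_le ?_
    filter_upwards [hw.eventually_ne (fourier_coe_ne_one_of_irrational hL hh)] with a ha
    exact norm_sum_Icc_zpow_le (Circle.norm_coe _) ha (N a)
  convert (tendsto_inv_atTop_zero.comp hA).zero_smul_isBoundedUnder_le hbdd using 2 with a
  simp only [scaledSum, Function.comp_apply, w, ← fourier_zsmul_apply, ← AddCircle.coe_zsmul,
    zsmul_eq_mul]

theorem ContinuousMap.integrable {X E : Type*} [TopologicalSpace X] [CompactSpace X]
    [MeasurableSpace X] [OpensMeasurableSpace X] [NormedAddCommGroup E] (μ : Measure X)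
    [IsFiniteMeasure μ] (f : C(X, E)) : Integrable f μ :=
  (map_continuous f).integrable_of_hasCompactSupport (HasCompactSupport.of_compactSpace _)

theorem integral_pow_succ_zero_one (k : ℕ) : ∫ y in (0 : ℝ)..1, y ^ (k + 1) = 1 / (k + 2) := by
  rw [integral_pow, one_pow, zero_pow (by omega)]
  push_cast
  ring

section Criterion

variable {α ι : Type*} {l : Filter α} {A : α → ℝ} {s : α → Finset ι}
  {z : α → ι → UnitAddCircle} {t : ℝ}

theorem tendsto_scaledSum_of_mem_span_fourier
    (hcard : Tendsto (fun a => (#(s a) : ℝ) / A a) l (𝓝 t))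
    (hfourier : ∀ h : ℤ, h ≠ 0 → Tendsto (scaledSum A s z (fourier h)) l (𝓝 0))
    {P : C(UnitAddCircle, ℂ)} (hP : P ∈ Submodule.span ℂ (Set.range fourier)) :
    Tendsto (scaledSum A s z P) l (𝓝 (t • ∫ x, P x ∂haarAddCircle)) := by
  induction hP using Submodule.span_induction with
  | mem P hP =>
    obtain ⟨h, rfl⟩ := hP
    rcases eq_or_ne h 0 with rfl | hh
    · have h1 : ⇑(fourier 0 : C(UnitAddCircle, ℂ)) = fun _ => 1 :=
        funext fun _ => fourier_zero
      simp only [h1, scaledSum_const, integral_const, probReal_univ, one_smul]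
      exact hcard.smul_const 1
    · rw [integral_eq_zero_of_add_right_eq_neg (fourier_add_half_inv_index hh one_pos), smul_zero]
      exact hfourier h hh
  | zero => simpa [Pi.zero_def, scaledSum_const] using tendsto_const_nhds
  | add P Q _ _ hP hQ =>
    simp only [ContinuousMap.coe_add, scaledSum_add, Pi.add_apply,
      integral_add (P.integrable _) (Q.integrable _), smul_add]
    exact hP.add hQ
  | smul c P _ hP =>
    simp only [ContinuousMap.coe_smul, scaledSum_smul, Pi.smul_apply, integral_smul, smul_comm t c]
    exact hP.const_smul c

theorem tendsto_scaledSum_of_fourier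
    (hcard : Tendsto (fun a => (#(s a) : ℝ) / A a) l (𝓝 t))
    (hfourier : ∀ h : ℤ, h ≠ 0 → Tendsto (scaledSum A s z (fourier h)) l (𝓝 0))
    (Φ : C(UnitAddCircle, ℂ)) :
    Tendsto (scaledSum A s z Φ) l (𝓝 (t • ∫ x, Φ x ∂haarAddCircle)) := by
  refine tendsto_of_forall_approx fun ε hε => ?_
  set δ := ε / (|t| + 1)
  have hδ : 0 < δ := by positivity
  have hΦ : Φ ∈ closure
      (Submodule.span ℂ (Set.range (fourier (T := 1))) : Set C(UnitAddCircle, ℂ)) := by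
    rw [← Submodule.topologicalClosure_coe, span_fourier_closure_eq_top]
    trivial
  obtain ⟨P, hP, hΦP⟩ := Metric.mem_closure_iff.1 hΦ δ hδ
  have hpt (x : UnitAddCircle) : ‖(Φ - P) x‖ ≤ δ :=
    (ContinuousMap.norm_coe_le_norm _ x).trans (by rw [← dist_eq_norm]; exact hΦP.le)
  refine ⟨_, _, tendsto_scaledSum_of_mem_span_fourier hcard hfourier hP, ?_, ?_⟩
  · calc dist _ _ = |t| * ‖∫ x, (Φ - P) x ∂haarAddCircle‖ := by
          rw [dist_smul₀, dist_comm, dist_eq_norm, ContinuousMap.coe_sub, Pi.sub_def,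
            integral_sub (Φ.integrable _) (P.integrable _), Real.norm_eq_abs]
      _ ≤ |t| * δ := by
          gcongr
          simpa using norm_integral_le_of_norm_le_const (ae_of_all haarAddCircle hpt)
      _ ≤ (|t| + 1) * δ := by gcongr; linarith
      _ = ε := mul_div_cancel₀ _ (by positivity)
  · filter_upwards [hcard.abs.eventually_lt_const (lt_add_one |t|)] with a ha
    rw [dist_eq_norm, ← Pi.sub_apply, ← scaledSum_sub, ← ContinuousMap.coe_sub]
    calc _ ≤ |(#(s a) : ℝ) / A a| * δ := norm_scaledSum_le A s z hpt a
      _ ≤ (|t| + 1) * δ := by gcongr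
      _ = ε := mul_div_cancel₀ _ (by positivity)

theorem tendsto_scaledSum_of_continuousOn_of_eq {x : α → ι → ℝ}
    (hx : ∀ a j, x a j ∈ Set.Ico 0 1)
    (hcard : Tendsto (fun a => (#(s a) : ℝ) / A a) l (𝓝 t))
    (hfourier : ∀ h : ℤ, h ≠ 0 →
      Tendsto (scaledSum A s (fun a j => (x a j : UnitAddCircle)) (fourier h)) l (𝓝 0))
    {G : ℝ → ℝ} (hG : ContinuousOn G (Set.Icc 0 1)) (hG01 : G 0 = G 1) :
    Tendsto (scaledSum A s x G) l (𝓝 (t * ∫ y in (0 : ℝ)..1, G y)) := by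
  let Φ : C(UnitAddCircle, ℂ) :=
    ⟨liftIco 1 0 (fun y => (G y : ℂ)), liftIco_continuous (by simp [hG01])
      (by rw [zero_add]; exact Complex.continuous_ofReal.comp_continuousOn hG)⟩
  have hΦ {y : ℝ} (hy : y ∈ Set.Ico 0 1) : Φ y = G y :=
    liftIco_zero_coe_apply (f := fun y => (G y : ℂ)) hy
  have hint : ∫ z, Φ z ∂haarAddCircle = ↑(∫ y in (0 : ℝ)..1, G y) := by
    rw [← intervalIntegral.integral_ofReal, ← one_smul ENNReal haarAddCircle,
      ← ENNReal.ofReal_one, ← volume_eq_smul_haarAddCircle,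
      ← AddCircle.intervalIntegral_preimage 1 0, zero_add]
    exact intervalIntegral.integral_congr_Ioo_of_le zero_le_one fun y hy =>
      hΦ (Set.Ioo_subset_Ico_self hy)
  have hsum (a : α) : scaledSum A s (fun a j => (x a j : UnitAddCircle)) Φ a
      = ((scaledSum A s x G a : ℝ) : ℂ) := by
    simp [scaledSum, hΦ (hx a _)]
  have := (Complex.continuous_re.tendsto _).comp (tendsto_scaledSum_of_fourier hcard hfourier Φ)
  simpa [Function.comp_def, hint, hsum] using this

theorem tendsto_scaledSum_add_smul_pow {x : α → ι → ℝ} (hx : ∀ a j, x a j ∈ Set.Ico 0 1)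
    (hcard : Tendsto (fun a => (#(s a) : ℝ) / A a) l (𝓝 t))
    (hfourier : ∀ h : ℤ, h ≠ 0 →
      Tendsto (scaledSum A s (fun a j => (x a j : UnitAddCircle)) (fourier h)) l (𝓝 0))
    {G : ℝ → ℝ} (hG : ContinuousOn G (Set.Icc 0 1)) (k : ℕ) :
    Tendsto (scaledSum A s x (G + (G 0 - G 1) • fun y : ℝ => y ^ (k + 1)))
      l (𝓝 (t * ((∫ y in (0 : ℝ)..1, G y) + (G 0 - G 1) / (k + 2)))) := by
  have hint : ∫ y in (0 : ℝ)..1, (G + (G 0 - G 1) • fun y : ℝ => y ^ (k + 1)) y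
      = (∫ y in (0 : ℝ)..1, G y) + (G 0 - G 1) / (k + 2) := by
    simp only [Pi.add_apply, Pi.smul_apply, smul_eq_mul]
    rw [intervalIntegral.integral_add (hG.intervalIntegrable_of_Icc zero_le_one)
      (Continuous.intervalIntegrable (by fun_prop) _ _), intervalIntegral.integral_const_mul,
      integral_pow_succ_zero_one]
    ring
  rw [← hint]
  exact tendsto_scaledSum_of_continuousOn_of_eq hx hcard hfourier (hG.add (by fun_prop))
    (by simp)

theorem eventually_abs_scaledSum_pow_lt {x : α → ι → ℝ} (hx : ∀ a j, x a j ∈ Set.Ico 0 1)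
    (hcard : Tendsto (fun a => (#(s a) : ℝ) / A a) l (𝓝 t))
    (hfourier : ∀ h : ℤ, h ≠ 0 →
      Tendsto (scaledSum A s (fun a j => (x a j : UnitAddCircle)) (fourier h)) l (𝓝 0))
    (k : ℕ) :
    ∀ᶠ a in l, |scaledSum A s x (fun y : ℝ => y ^ (k + 1)) a| < (2 * |t| + 1) / (k + 2) := by
  set u : ℝ → ℝ := fun y => y ^ (k + 1) + (1 - y) ^ (k + 1)
  have hu : ∫ y in (0 : ℝ)..1, u y = 2 / (k + 2) := by
    rw [intervalIntegral.integral_add (Continuous.intervalIntegrable (by fun_prop) _ _)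
      (Continuous.intervalIntegrable (by fun_prop) _ _),
      intervalIntegral.integral_comp_sub_left (fun y : ℝ => y ^ (k + 1)), sub_self, sub_zero,
      integral_pow_succ_zero_one]
    ring
  have hU := tendsto_scaledSum_of_continuousOn_of_eq hx hcard hfourier (G := u) (by fun_prop)
    (by simp [u])
  have hlt : |t * ∫ y in (0 : ℝ)..1, u y| < (2 * |t| + 1) / (k + 2) := by
    rw [hu, abs_mul, abs_div, abs_two, abs_of_pos (by positivity : (0 : ℝ) < k + 2),
      mul_div_assoc']
    gcongr
    linarith
  filter_upwards [hU.abs.eventually_lt_const hlt] with a ha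
  refine lt_of_le_of_lt (abs_scaledSum_le_abs_scaledSum A s x (fun j => ?_) fun j => ?_) ha
  · exact pow_nonneg (hx a j).1 _
  · exact le_add_of_nonneg_right (pow_nonneg (sub_nonneg.2 (hx a j).2.le) _)

theorem tendsto_scaledSum_of_continuousOn {x : α → ι → ℝ}
    (hx : ∀ a j, x a j ∈ Set.Ico 0 1)
    (hcard : Tendsto (fun a => (#(s a) : ℝ) / A a) l (𝓝 t))
    (hfourier : ∀ h : ℤ, h ≠ 0 →
      Tendsto (scaledSum A s (fun a j => (x a j : UnitAddCircle)) (fourier h)) l (𝓝 0))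
    {G : ℝ → ℝ} (hG : ContinuousOn G (Set.Icc 0 1)) :
    Tendsto (scaledSum A s x G) l (𝓝 (t * ∫ y in (0 : ℝ)..1, G y)) := by
  set c := G 0 - G 1
  set M := |c| * (2 * |t| + 1)
  refine tendsto_of_forall_approx fun ε hε => ?_
  obtain ⟨k, hk⟩ := exists_nat_gt (M / ε)
  have hk0 : (0 : ℝ) < k + 2 := by positivity
  have hMk : M / (k + 2) ≤ ε := by
    rw [div_lt_iff₀ hε] at hk
    rw [div_le_iff₀ hk0]
    nlinarith
  refine ⟨_, _, tendsto_scaledSum_add_smul_pow hx hcard hfourier hG k, ?_, ?_⟩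
  · calc dist _ _ = |t| * |c| / (k + 2) := by
          rw [Real.dist_eq, ← mul_sub, add_sub_cancel_left, abs_mul, abs_div, abs_of_pos hk0,
            mul_div_assoc]
      _ ≤ M / (k + 2) := by gcongr; nlinarith [abs_nonneg c, abs_nonneg t]
      _ ≤ ε := hMk
  · filter_upwards [eventually_abs_scaledSum_pow_lt hx hcard hfourier k] with a ha
    rw [scaledSum_add, scaledSum_smul, Pi.add_apply, Pi.smul_apply, dist_self_add_right,
      norm_smul, Real.norm_eq_abs, Real.norm_eq_abs]
    calc |c| * |scaledSum A s x (fun y : ℝ => y ^ (k + 1)) a|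
      _ ≤ |c| * ((2 * |t| + 1) / (k + 2)) := by gcongr
      _ = M / (k + 2) := by ring
      _ ≤ ε := hMk

end Criterion

theorem continuous_fmL (L : ℝ) (m : ℤ) : Continuous (fmL L m) := by
  unfold fmL
  fun_prop (disch := norm_num)

theorem sum_fmL_tendsto_irrational_case_general (a b : ℕ → ℕ) (ha : StrictMono a)
    (L : ℝ) (hirr : Irrational L)
    (hconv : Tendsto (fun n => (b n : ℝ) / (a n : ℝ)) atTop (nhds L)) :
    ∀ (m : ℤ) (t : ℝ), 0 < t →
      Tendsto (fun n =>
        (1 / (a n : ℝ)) * ∑ j ∈ Finset.Icc (1 : ℤ) ⌊(a n : ℝ) * t⌋,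
            fmL L m (Int.fract ((j : ℝ) * ((b n : ℝ) / (a n : ℝ)))))
        atTop (nhds (t * ∫ x in (0 : ℝ)..1, fmL L m x)) := by
  intro m t ht
  have hA : Tendsto (fun n => (a n : ℝ)) atTop atTop :=
    tendsto_natCast_atTop_atTop.comp ha.tendsto_atTop
  have hcard :
      Tendsto (fun n => (#(Icc (1 : ℤ) ⌊(a n : ℝ) * t⌋) : ℝ) / a n) atTop (𝓝 t) := by
    simpa [Function.comp_def, Int.card_Icc, Int.floor_toNat, mul_comm] using
      (tendsto_nat_floor_mul_div_atTop ht.le).comp hA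
  have hfourier (h : ℤ) (hh : h ≠ 0) :=
    tendsto_scaledSum_fourier_of_irrational hA (fun n => ⌊(a n : ℝ) * t⌋) hconv hirr hh
  have := tendsto_scaledSum_of_continuousOn
    (x := fun n (j : ℤ) => Int.fract ((j : ℝ) * ((b n : ℝ) / (a n : ℝ))))
    (fun _ _ => ⟨Int.fract_nonneg _, Int.fract_lt_one _⟩) hcard
    (by simpa only [AddCircle.coe_fract] using hfourier) (continuous_fmL L m).continuousOn
  refine this.congr fun n => ?_
  simp [scaledSum, one_div]

/-- If `L_n = b_n/a_n → L ∈ (0,∞)` with `L` irrational, then for every `m ∈ ℤ` and `t > 0`,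
`(1/a_n) ∑_{j=1}^{⌊a_n t⌋} f_{m,L}({j L_n}) → t ∫_0^1 f_{m,L}(x) dx`. -/
theorem sum_fmL_tendsto_irrational_case (a b : ℕ → ℕ) (ha : StrictMono a) (hb : StrictMono b)
    (ha0 : ∀ n, 0 < a n) (hb0 : ∀ n, 0 < b n)
    (L : ℝ) (hLpos : 0 < L) (hirr : Irrational L)
    (hconv : Tendsto (fun n => (b n : ℝ) / (a n : ℝ)) atTop (nhds L)) :
    ∀ (m : ℤ) (t : ℝ), 0 < t →
      Tendsto (fun n =>
        (1 / (a n : ℝ)) * ∑ j ∈ Finset.Icc (1 : ℤ) ⌊(a n : ℝ) * t⌋,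
            fmL L m (Int.fract ((j : ℝ) * ((b n : ℝ) / (a n : ℝ)))))
        atTop (nhds (t * ∫ x in (0 : ℝ)..1, fmL L m x)) :=
  sum_fmL_tendsto_irrational_case_general a b ha L hirr hconv
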